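/- Fix integers k ≥ 1, n ≥ 1, nonnegative integers s₁,…,s_k, t₁,…,t_k and nonnegative integers e_{i,j} = e_{j,i} for i ≠ j in {1,…,k}, such that s_i + t_i > 0 and Σ_{j≠i} e_{i,j} > 0 for every i. Let β₁,…,β_k be permutations of {1,…,2n} such that at least one β_i is connected. Then for every flow f in the associated flow network, F_{n,n}(β) ≥ |f|·(2n − 2) + 2; equivalently, X(2n−2) − F_{n,n}(β) ≤ −2 where X is the maximum value of a flow. -/

import Mathlib

/-!
For a permutation `σ` of a finite set of size `m`, `cycleCount σ` is the number of cycles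
(fixed points count as cycles) and `permLen σ = m - cycleCount σ` (the minimal number of
transpositions needed to write `σ`).  We model `{1,…,2n}` as `Fin n ⊕ Fin n`, the first
summand being `{1,…,n}` and the second `{n+1,…,2n}`.  `gammaNN n` is the product of the
two `n`-cycles `(1,2,…,n)` and `(n+1,…,2n)`.
-/

/-- The number of cycles of a permutation, where fixed points count as cycles. -/
noncomputable def cycleCount {α : Type*} [Fintype α] [DecidableEq α]
    (σ : Equiv.Perm α) : ℕ :=
  Multiset.card σ.cycleType + (Fintype.card α - σ.support.card)

/-- `|σ| = m - #(σ)`, the minimal number of transpositions whose product is `σ`. -/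
noncomputable def permLen {α : Type*} [Fintype α] [DecidableEq α]
    (σ : Equiv.Perm α) : ℕ :=
  Fintype.card α - cycleCount σ

/-- `γ_{n,n}`: the product of the two `n`-cycles `(1,…,n)` and `(n+1,…,2n)`. -/
def gammaNN (n : ℕ) : Equiv.Perm (Fin n ⊕ Fin n) :=
  Equiv.sumCongr (finRotate n) (finRotate n)

/-- A permutation of `{1,…,2n}` is connected if some cycle of it contains both an
element of `{1,…,n}` and an element of `{n+1,…,2n}`. -/
def IsConnectedPerm {n : ℕ} (β : Equiv.Perm (Fin n ⊕ Fin n)) : Prop :=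
  ∃ a b : Fin n, β.SameCycle (Sum.inl a) (Sum.inr b)

/-- `F_{n,n}(α,β) = Σᵢ (sᵢ|γ_{n,n}⁻¹αᵢ| + tᵢ|αᵢ|) + Σ_{i<j} e_{i,j}|βᵢ⁻¹βⱼ| + Σᵢ dᵢ|βᵢαᵢ⁻¹|`. -/
noncomputable def FnnPair (n k : ℕ) (s t d : Fin k → ℕ) (e : Fin k → Fin k → ℕ)
    (A B : Fin k → Equiv.Perm (Fin n ⊕ Fin n)) : ℕ :=
  (∑ i, (s i * permLen ((gammaNN n)⁻¹ * A i) + t i * permLen (A i)))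
    + (∑ i, ∑ j, if i < j then e i j * permLen ((B i)⁻¹ * B j) else 0)
    + (∑ i, d i * permLen (B i * (A i)⁻¹))

/-- `F_{n,n}(β) = Σᵢ (sᵢ|γ_{n,n}⁻¹βᵢ| + tᵢ|βᵢ|) + Σ_{i<j} e_{i,j}|βᵢ⁻¹βⱼ|`. -/
noncomputable def FnnOne (n k : ℕ) (s t : Fin k → ℕ) (e : Fin k → Fin k → ℕ)
    (B : Fin k → Equiv.Perm (Fin n ⊕ Fin n)) : ℕ :=
  (∑ i, (s i * permLen ((gammaNN n)⁻¹ * B i) + t i * permLen (B i)))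
    + (∑ i, ∑ j, if i < j then e i j * permLen ((B i)⁻¹ * B j) else 0)

/-- Vertices of the flow network: `Sum.inl i` are the inner vertices `1,…,k`,
`Sum.inr true` is the source and `Sum.inr false` is the sink. -/
abbrev NetVertex (k : ℕ) := Fin k ⊕ Bool

/-- The source of the flow network. -/
def netSrc (k : ℕ) : NetVertex k := Sum.inr true

/-- The sink of the flow network. -/
def netSnk (k : ℕ) : NetVertex k := Sum.inr false

/-- Capacities: `c(src,i) = sᵢ`, `c(i,snk) = tᵢ`, `c(i,j) = e_{i,j}` for `i ≠ j`,
and `0` on all other ordered pairs. -/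
def netCap {k : ℕ} (s t : Fin k → ℕ) (e : Fin k → Fin k → ℕ) :
    NetVertex k → NetVertex k → ℤ
  | Sum.inr true, Sum.inl i => s i
  | Sum.inl i, Sum.inr false => t i
  | Sum.inl i, Sum.inl j => if i = j then 0 else e i j
  | _, _ => 0

/-- A flow with respect to capacities `c`: bounded by capacities, skew-symmetric,
and conserved at every vertex other than the source and the sink. -/
def IsFlow {k : ℕ} (c f : NetVertex k → NetVertex k → ℤ) : Prop :=
  (∀ u v, f u v ≤ c u v) ∧ (∀ u v, f u v = - f v u) ∧
    (∀ u, u ≠ netSrc k → u ≠ netSnk k → ∑ v, f v u = 0)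

/-- The value `|f| = Σᵤ f(src, u)` of a flow. -/
def flowValue {k : ℕ} (f : NetVertex k → NetVertex k → ℤ) : ℤ :=
  ∑ u, f (netSrc k) u

/-!
Write `Lᵢ = |γ⁻¹βᵢ|`, `Rᵢ = |βᵢ|` and `Wᵢⱼ = |βᵢ⁻¹βⱼ|`. As `|σ|` is the word length of `σ` in
the transpositions, `(σ, τ) ↦ |σ⁻¹τ|` is a metric, so `L` and `R` are `1`-Lipschitz for `W` and
`Lᵢ + Rᵢ ≥ |γ| = 2n - 2 =: D`. A connected `βᵢ` does better, `Lᵢ + Rᵢ ≥ 2n`: removing from it a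
transposition that joins the two blocks either leaves it connected (induct), or leaves a block
preserving `β'`, and then that transposition merges two cycles of `γ⁻¹β'`.

Flows are bounded by cuts: for an integer potential `0 ≤ p ≤ D`,
`|f| D ≤ Σ sᵢ (D - pᵢ) + tᵢ pᵢ + Σ_{i<j} eᵢⱼ |pᵢ - pⱼ|`. If also `D - pᵢ ≤ Lᵢ`, `pᵢ ≤ Rᵢ` and
`|pᵢ - pⱼ| ≤ Wᵢⱼ`, each term of this bound is at most the matching term of `F_{n,n}(β)`. For a
connected `βᵢ` with `sᵢ > 0`, the potential `p = min(R, D)` leaves slack `2` at `i` and a neighbour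
`j` of `i`; if `sᵢ = 0` then `tᵢ > 0` and the mirror potential `D - min(L, D)` does the same.
-/

open Equiv Equiv.Perm Finset

theorem swap_apply_iff_of_iff {α : Type*} [DecidableEq α] {p : α → Prop} {a b : α}
    (hab : p a ↔ p b) (u : α) : p (swap a b u) ↔ p u := by
  rw [swap_apply_def]
  split_ifs with h1 h2 <;> simp_all

section CycleCount

variable {α : Type*} [Fintype α] [DecidableEq α]

theorem cycleCount_add_card_support (σ : Perm α) :
    cycleCount σ + #σ.support = Multiset.card σ.cycleType + Fintype.card α := by
  have := card_le_univ σ.support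
  unfold cycleCount
  omega

theorem two_mul_card_cycleType_le (σ : Perm α) : 2 * Multiset.card σ.cycleType ≤ #σ.support := by
  rw [← sum_cycleType, mul_comm]
  simpa using Multiset.card_nsmul_le_sum (fun _ h => two_le_of_mem_cycleType h)

theorem permLen_add_cycleCount (σ : Perm α) : permLen σ + cycleCount σ = Fintype.card α := by
  have := cycleCount_add_card_support σ
  have := two_mul_card_cycleType_le σ
  unfold permLen
  omega

theorem permLen_eq_zero_iff {σ : Perm α} : permLen σ = 0 ↔ σ = 1 := by
  have := cycleCount_add_card_support σ
  have := two_mul_card_cycleType_le σ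
  have := permLen_add_cycleCount σ
  rw [← card_support_eq_zero]
  omega

theorem permLen_inv (σ : Perm α) : permLen σ⁻¹ = permLen σ := by
  simp only [permLen, cycleCount, cycleType_inv, support_inv]

theorem Equiv.Perm.Disjoint.cycleCount_mul_add_card {σ τ : Perm α} (h : σ.Disjoint τ) :
    cycleCount (σ * τ) + Fintype.card α = cycleCount σ + cycleCount τ := by
  have := cycleCount_add_card_support (σ * τ)
  have := cycleCount_add_card_support σ
  have := cycleCount_add_card_support τ
  rw [h.cycleType_mul, Multiset.card_add] at *
  rw [h.card_support_mul] at *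
  omega

theorem Equiv.Perm.IsCycle.cycleCount_add_card_support {c : Perm α} (hc : c.IsCycle) :
    cycleCount c + #c.support = Fintype.card α + 1 := by
  rw [_root_.cycleCount_add_card_support, hc.cycleType, Multiset.card_singleton, add_comm]

theorem Equiv.Perm.IsCycle.cycleCount_swap_apply_mul {c : Perm α} (hc : c.IsCycle) {z : α}
    (hz : c z ≠ z) : cycleCount (swap z (c z) * c) = cycleCount c + 1 := by
  have h := hc.cycleCount_add_card_support
  by_cases hc2 : c (c z) = z
  · have hcswap : c = swap z (c z) := hc.eq_swap_of_apply_apply_eq_self hz hc2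
    have h1 : swap z (c z) * c = 1 := by nth_rewrite 2 [hcswap]; exact swap_mul_self _ _
    rw [card_support_eq_two.mpr ⟨z, c z, hz.symm, hcswap⟩] at h
    have h0 : cycleCount (1 : Perm α) = Fintype.card α := by simp [cycleCount]
    rw [h1, h0]
    omega
  · have h' := (hc.swap_mul hz hc2).cycleCount_add_card_support
    have hzc : z ∈ c.support := mem_support.mpr hz
    rw [support_swap_mul_eq c z hc2, sdiff_singleton_eq_erase, card_erase_of_mem hzc] at h'
    have := card_pos.mpr ⟨z, hzc⟩
    omega

theorem cycleCount_swap_apply_mul {g : Perm α} {z : α} (hz : g z ≠ z) :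
    cycleCount (swap z (g z) * g) = cycleCount g + 1 := by
  set c := g.cycleOf z
  have hcz : c z = g z := cycleOf_apply_self g z
  have hzc : z ∈ c.support := mem_support.mpr (hcz ▸ hz)
  have hdis : (g * c⁻¹).Disjoint c := disjoint_mul_inv_of_mem_cycleFactorsFinset
    (cycleOf_mem_cycleFactorsFinset_iff.mpr (mem_support.mpr hz))
  have hfix : ∀ w ∈ c.support, (g * c⁻¹) w = w := fun w hw =>
    (hdis w).resolve_right (mem_support.mp hw)
  have hsplit : swap z (g z) * g = g * c⁻¹ * (swap z (c z) * c) := by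
    rw [← mul_assoc, mul_swap_eq_swap_mul, hfix z hzc, hcz,
      hfix (g z) (hcz ▸ apply_mem_support.mpr hzc), mul_assoc, inv_mul_cancel_right]
  have hdis' : (g * c⁻¹).Disjoint (swap z (c z) * c) :=
    hdis.mono le_rfl fun w hw => (mem_support_swap_mul_imp_mem_support_ne hw).1
  have h := hdis.cycleCount_mul_add_card
  have h' := hdis'.cycleCount_mul_add_card
  have : cycleCount (swap z (c z) * c) = cycleCount c + 1 :=
    (isCycle_cycleOf g hz).cycleCount_swap_apply_mul (hcz ▸ hz)
  rw [inv_mul_cancel_right] at h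
  rw [hsplit]
  omega

theorem cycleCount_swap_mul_of_apply_eq_self {σ : Perm α} {x y : α} (hxy : x ≠ y)
    (hy : σ y = y) : cycleCount (swap x y * σ) + 1 = cycleCount σ := by
  have hg : (swap x y * σ) y = x := by rw [Perm.mul_apply, hy, swap_apply_right]
  have := cycleCount_swap_apply_mul (show (swap x y * σ) y ≠ y by rwa [hg])
  rw [hg, swap_comm, swap_mul_self_mul] at this
  omega

/-- Merging the cycles of `x` and `y` amounts to splitting `y` off its cycle, merging `x` with
`σ y`, and merging the now fixed point `y` back in. -/
theorem cycleCount_swap_mul_add_one_eq {σ : Perm α} {x y : α} (hxy : x ≠ y) (hy : σ y ≠ y)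
    (hxw : x ≠ σ y) :
    cycleCount (swap x y * σ) + 1 = cycleCount (swap x (σ y) * (swap y (σ y) * σ)) := by
  have hρy : (swap x (σ y) * (swap y (σ y) * σ)) y = y := by
    rw [Perm.mul_apply, Perm.mul_apply, swap_apply_right, swap_apply_of_ne_of_ne hxy.symm hy.symm]
  have heq : swap x y * σ = swap (σ y) y * (swap x (σ y) * (swap y (σ y) * σ)) := by
    rw [swap_comm y (σ y), ← mul_assoc, ← mul_assoc, swap_mul_swap_mul_swap hxw hxy, swap_comm]
  rw [heq]
  exact cycleCount_swap_mul_of_apply_eq_self hy hρy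

theorem permLen_swap_apply_mul {g : Perm α} {z : α} (hz : g z ≠ z) :
    permLen (swap z (g z) * g) + 1 = permLen g := by
  have := cycleCount_swap_apply_mul hz
  have := permLen_add_cycleCount g
  have := permLen_add_cycleCount (swap z (g z) * g)
  omega

theorem cycleCount_le_cycleCount_swap_mul_add_one (σ : Perm α) {x y : α} (hxy : x ≠ y) :
    cycleCount σ ≤ cycleCount (swap x y * σ) + 1 := by
  induction h : permLen σ using Nat.strong_induction_on generalizing σ x y with
  | _ m ih =>
  by_cases hy : σ y = y
  · have := cycleCount_swap_mul_of_apply_eq_self hxy hy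
    omega
  have hsplit := cycleCount_swap_apply_mul hy
  by_cases hxw : x = σ y
  · rw [hxw, swap_comm]
    omega
  have := ih _ (by have := permLen_swap_apply_mul hy; omega) (swap y (σ y) * σ) hxw rfl
  have := cycleCount_swap_mul_add_one_eq hxy hy hxw
  omega

theorem cycleCount_swap_mul_add_one_of_separated {σ : Perm α} {p : α → Prop}
    (hp : ∀ z, p (σ z) ↔ p z) {x y : α} (hx : p x) (hy : ¬p y) :
    cycleCount (swap x y * σ) + 1 = cycleCount σ := by
  induction h : permLen σ using Nat.strong_induction_on generalizing σ x y with
  | _ m ih =>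
  have hxy : x ≠ y := fun h => hy (h ▸ hx)
  by_cases hσy : σ y = y
  · exact cycleCount_swap_mul_of_apply_eq_self hxy hσy
  have hw : ¬p (σ y) := by rwa [hp]
  have hp' : ∀ z, p ((swap y (σ y) * σ) z) ↔ p z := fun z => by
    rw [Perm.mul_apply, swap_apply_iff_of_iff (iff_of_false hy hw), hp]
  have hxw : x ≠ σ y := fun h => hw (h ▸ hx)
  have := ih _ (by have := permLen_swap_apply_mul hσy; omega) hp' hx hw rfl
  have := cycleCount_swap_mul_add_one_eq hxy hσy hxw
  have := cycleCount_swap_apply_mul hσy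
  omega

theorem permLen_swap_mul_le (σ : Perm α) {x y : α} (hxy : x ≠ y) :
    permLen (swap x y * σ) ≤ permLen σ + 1 := by
  have := cycleCount_le_cycleCount_swap_mul_add_one σ hxy
  have := permLen_add_cycleCount σ
  have := permLen_add_cycleCount (swap x y * σ)
  omega

theorem permLen_swap_mul_of_separated {σ : Perm α} {p : α → Prop} (hp : ∀ z, p (σ z) ↔ p z)
    {x y : α} (hx : p x) (hy : ¬p y) : permLen (swap x y * σ) = permLen σ + 1 := by
  have := cycleCount_swap_mul_add_one_of_separated hp hx hy
  have := permLen_add_cycleCount σ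
  have := permLen_add_cycleCount (swap x y * σ)
  omega

theorem permLen_mul_le (σ τ : Perm α) : permLen (σ * τ) ≤ permLen σ + permLen τ := by
  induction h : permLen σ using Nat.strong_induction_on generalizing σ with
  | _ m ih =>
  by_cases hσ : σ = 1
  · simp [hσ]
  obtain ⟨z, hz⟩ : ∃ z, σ z ≠ z := not_forall.mp fun h' => hσ (Equiv.ext h')
  have hlen := permLen_swap_apply_mul hz
  have := ih _ (by omega) (swap z (σ z) * σ) rfl
  have := permLen_swap_mul_le (swap z (σ z) * σ * τ) hz.symm
  rw [← mul_assoc, swap_mul_self_mul] at this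
  omega

theorem permLen_inv_mul_comm (x y : Perm α) : permLen (x⁻¹ * y) = permLen (y⁻¹ * x) := by
  rw [← permLen_inv, mul_inv_rev, inv_inv]

theorem abs_permLen_inv_mul_sub_le (a x y : Perm α) :
    |(permLen (a⁻¹ * x) : ℤ) - permLen (a⁻¹ * y)| ≤ permLen (x⁻¹ * y) := by
  have hx := permLen_mul_le (a⁻¹ * y) (y⁻¹ * x)
  have hy := permLen_mul_le (a⁻¹ * x) (x⁻¹ * y)
  rw [mul_assoc, mul_inv_cancel_left, permLen_inv_mul_comm y] at hx
  rw [mul_assoc, mul_inv_cancel_left] at hy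
  rw [abs_sub_le_iff]
  omega

end CycleCount

section SumCongr

variable {α β : Type*} [Fintype α] [DecidableEq α] [Fintype β] [DecidableEq β]

theorem cycleType_sumCongr (a : Perm α) (b : Perm β) :
    Perm.cycleType (Equiv.sumCongr a b) = a.cycleType + b.cycleType := by
  have hl : (Equiv.sumCongr a 1 : Perm (α ⊕ β)) = a.extendDomain (sumIsLeft (β := β)).symm := by
    ext (x | x)
    · rw [extendDomain_apply_subtype _ _ (by simp)]; simp
    · rw [extendDomain_apply_not_subtype _ _ (by simp)]; simp
  have hr : (Equiv.sumCongr 1 b : Perm (α ⊕ β)) = b.extendDomain (sumIsRight (α := α)).symm := by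
    ext (x | x)
    · rw [extendDomain_apply_not_subtype _ _ (by simp)]; simp
    · rw [extendDomain_apply_subtype _ _ (by simp)]; simp
  have hdis : Perm.Disjoint (Equiv.sumCongr a (1 : Perm β)) (Equiv.sumCongr 1 b) := by
    rintro (x | x) <;> simp
  have hab : (Equiv.sumCongr a b : Perm (α ⊕ β)) = Equiv.sumCongr a 1 * Equiv.sumCongr 1 b := by
    ext (x | x) <;> simp
  rw [hab, hdis.cycleType_mul, hl, hr, cycleType_extendDomain, cycleType_extendDomain]

theorem cycleCount_sumCongr (a : Perm α) (b : Perm β) :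
    cycleCount (Equiv.sumCongr a b : Perm (α ⊕ β)) = cycleCount a + cycleCount b := by
  have h := cycleCount_add_card_support (Equiv.sumCongr a b : Perm (α ⊕ β))
  rw [← sum_cycleType, cycleType_sumCongr, Multiset.sum_add, sum_cycleType, sum_cycleType,
    Multiset.card_add, Fintype.card_sum] at h
  have := cycleCount_add_card_support a
  have := cycleCount_add_card_support b
  omega

end SumCongr

theorem cycleCount_finRotate {n : ℕ} (hn : n ≠ 0) : cycleCount (finRotate n) = 1 := by
  obtain rfl | hn2 := (Nat.one_le_iff_ne_zero.mpr hn).eq_or_lt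
  · simp [cycleCount, Subsingleton.elim (finRotate 1) 1]
  have := (isCycle_finRotate_of_le hn2).cycleCount_add_card_support
  rw [support_finRotate_of_le hn2, card_univ] at this
  omega

theorem cycleCount_gammaNN {n : ℕ} (hn : n ≠ 0) : cycleCount (gammaNN n) = 2 := by
  rw [gammaNN, cycleCount_sumCongr, cycleCount_finRotate hn]

theorem permLen_gammaNN {n : ℕ} (hn : n ≠ 0) : permLen (gammaNN n) + 2 = 2 * n := by
  have := permLen_add_cycleCount (gammaNN n)
  rw [cycleCount_gammaNN hn, Fintype.card_sum, Fintype.card_fin] at this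
  omega

theorem isLeft_apply_of_mem_range_sumCongrHom {α β : Type*} {σ : Perm (α ⊕ β)}
    (h : σ ∈ (sumCongrHom α β).range) (z : α ⊕ β) : (σ z).isLeft = z.isLeft := by
  obtain ⟨⟨a, b⟩, rfl⟩ := h
  cases z <;> rfl

theorem mem_range_sumCongrHom_of_isLeft {α β : Type*} [Finite α] [Finite β] {σ : Perm (α ⊕ β)}
    (h : ∀ z, (σ z).isLeft = z.isLeft) : σ ∈ (sumCongrHom α β).range := by
  refine mem_sumCongrHom_range_of_perm_mapsTo_inl ?_
  rintro _ ⟨a, rfl⟩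
  have := h (Sum.inl a)
  rw [Sum.isLeft_inl, Sum.isLeft_iff] at this
  obtain ⟨b, hb⟩ := this
  exact ⟨b, hb.symm⟩

theorem gammaNN_mem_range (n : ℕ) : gammaNN n ∈ (sumCongrHom (Fin n) (Fin n)).range :=
  ⟨(finRotate n, finRotate n), rfl⟩

theorem isConnectedPerm_iff {n : ℕ} {β : Perm (Fin n ⊕ Fin n)} :
    IsConnectedPerm β ↔ ∃ z, (β z).isLeft ≠ z.isLeft := by
  constructor
  · rintro ⟨a, b, i, hi⟩
    by_contra! h
    have := isLeft_apply_of_mem_range_sumCongrHom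
      (zpow_mem (mem_range_sumCongrHom_of_isLeft h) i) (Sum.inl a)
    simp [hi] at this
  · rintro ⟨z | b, hz⟩
    · obtain ⟨b, hb⟩ : ∃ b, β (Sum.inl z) = Sum.inr b := by
        cases h : β (Sum.inl z) <;> simp_all
      exact ⟨z, b, 1, by simpa using hb⟩
    · obtain ⟨a, ha⟩ : ∃ a, β (Sum.inr b) = Sum.inl a := by
        cases h : β (Sum.inr b) <;> simp_all
      exact ⟨a, b, sameCycle_apply_right.mp (ha ▸ SameCycle.refl _ _)⟩

theorem IsConnectedPerm.notMem_range {n : ℕ} {β : Perm (Fin n ⊕ Fin n)}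
    (hβ : IsConnectedPerm β) : β ∉ (sumCongrHom (Fin n) (Fin n)).range := fun h => by
  obtain ⟨z, hz⟩ := isConnectedPerm_iff.mp hβ
  exact hz (isLeft_apply_of_mem_range_sumCongrHom h z)

theorem IsConnectedPerm.permLen_ne_zero {n : ℕ} {β : Perm (Fin n ⊕ Fin n)}
    (hβ : IsConnectedPerm β) : permLen β ≠ 0 := fun h =>
  hβ.notMem_range (permLen_eq_zero_iff.mp h ▸ one_mem _)

theorem IsConnectedPerm.permLen_gammaNN_inv_mul_ne_zero {n : ℕ} {β : Perm (Fin n ⊕ Fin n)}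
    (hβ : IsConnectedPerm β) : permLen ((gammaNN n)⁻¹ * β) ≠ 0 := fun h =>
  hβ.notMem_range (inv_mul_eq_one.mp (permLen_eq_zero_iff.mp h) ▸ gammaNN_mem_range n)

theorem le_permLen_gammaNN_inv_mul_add_permLen {n : ℕ} (hn : n ≠ 0)
    (β : Perm (Fin n ⊕ Fin n)) : 2 * n ≤ permLen ((gammaNN n)⁻¹ * β) + permLen β + 2 := by
  have h := permLen_mul_le β (β⁻¹ * gammaNN n)
  rw [mul_inv_cancel_left, ← permLen_inv (β⁻¹ * gammaNN n), mul_inv_rev, inv_inv] at h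
  have := permLen_gammaNN hn
  omega

theorem IsConnectedPerm.two_mul_le_permLen_add {n : ℕ} {β : Perm (Fin n ⊕ Fin n)}
    (hβ : IsConnectedPerm β) : 2 * n ≤ permLen ((gammaNN n)⁻¹ * β) + permLen β := by
  induction h : permLen β using Nat.strong_induction_on generalizing β with
  | _ m ih =>
  -- Split off a point `x` whose image lies in the other block. If what remains is not connected,
  -- `γ⁻¹β₁` preserves the blocks and the swap merges two of its cycles.
  obtain ⟨x, hx⟩ := isConnectedPerm_iff.mp hβ
  have hn : n ≠ 0 := by obtain ⟨a, -⟩ := hβ; exact a.pos.ne'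
  have hβx : β x ≠ x := fun h => hx (by rw [h])
  set γ := gammaNN n
  set β₁ := swap x (β x) * β
  have hlen : permLen β₁ + 1 = permLen β := permLen_swap_apply_mul hβx
  have hγ : γ⁻¹ * β = swap (γ⁻¹ x) (γ⁻¹ (β x)) * (γ⁻¹ * β₁) := by
    rw [← mul_assoc, ← mul_swap_eq_swap_mul, mul_assoc, swap_mul_self_mul]
  have hne : γ⁻¹ x ≠ γ⁻¹ (β x) := fun h => hβx (γ⁻¹.injective h).symm
  by_cases hβ₁ : IsConnectedPerm β₁
  · have hih : 2 * n ≤ permLen (γ⁻¹ * β₁) + permLen β₁ := ih _ (by omega) hβ₁ rfl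
    have := permLen_swap_mul_le (γ⁻¹ * β) hne
    rw [hγ, swap_mul_self_mul, ← hγ] at this
    omega
  · have hρ : γ⁻¹ * β₁ ∈ (sumCongrHom (Fin n) (Fin n)).range :=
      mul_mem (inv_mem (gammaNN_mem_range n))
        (mem_range_sumCongrHom_of_isLeft (by simpa [isConnectedPerm_iff] using hβ₁))
    have hγl : ∀ z, (γ⁻¹ z).isLeft = z.isLeft :=
      isLeft_apply_of_mem_range_sumCongrHom (inv_mem (gammaNN_mem_range n))
    have := permLen_swap_mul_of_separated (σ := γ⁻¹ * β₁)
      (p := fun z : Fin n ⊕ Fin n => z.isLeft = x.isLeft)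
      (fun z => by rw [isLeft_apply_of_mem_range_sumCongrHom hρ]) (hγl x) (by rw [hγl]; exact hx)
    have : 2 * n ≤ permLen (γ⁻¹ * β₁) + permLen β₁ + 2 :=
      le_permLen_gammaNN_inv_mul_add_permLen hn β₁
    rw [hγ]
    omega

theorem sum_sum_eq_sum_sum_ite_lt_add {ι M : Type*} [Fintype ι] [LinearOrder ι]
    [AddCommMonoid M] (x : ι → ι → M) (hx : ∀ i, x i i = 0) :
    ∑ i, ∑ j, x i j = ∑ i, ∑ j, if i < j then x i j + x j i else 0 := by
  have hsplit : ∀ i j, x i j = (if i < j then x i j else 0) + (if j < i then x i j else 0) :=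
    fun i j => by
      rcases lt_trichotomy i j with h | rfl | h
      · simp [h, h.not_gt]
      · simp [hx]
      · simp [h, h.not_gt]
  conv_lhs => rw [Fintype.sum_congr _ _ fun i => Fintype.sum_congr _ _ fun j => hsplit i j]
  simp only [Finset.sum_add_distrib]
  rw [Finset.sum_comm (f := fun i j => if j < i then x i j else 0), ← Finset.sum_add_distrib]
  refine Fintype.sum_congr _ _ fun i => ?_
  rw [← Finset.sum_add_distrib]
  refine Fintype.sum_congr _ _ fun j => ?_
  split_ifs <;> simp

theorem le_sum_sum_ite_lt {ι : Type*} [Fintype ι] [LinearOrder ι] (x : ι → ι → ℤ)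
    (hx : ∀ a b, 0 ≤ x a b) (hsymm : ∀ a b, x a b = x b a) {i j : ι} (hij : i ≠ j) :
    x i j ≤ ∑ a, ∑ b, if a < b then x a b else 0 := by
  have hnn : ∀ a b, 0 ≤ if a < b then x a b else 0 := fun a b => by
    split_ifs
    exacts [hx a b, le_rfl]
  wlog h : i < j generalizing i j
  · exact hsymm i j ▸ this hij.symm (hij.lt_or_gt.resolve_left h)
  calc x i j = if i < j then x i j else 0 := (if_pos h).symm
    _ ≤ ∑ b, if i < b then x i b else 0 :=
      Finset.single_le_sum (fun b _ => hnn i b) (Finset.mem_univ j)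
    _ ≤ ∑ a, ∑ b, if a < b then x a b else 0 :=
      Finset.single_le_sum (f := fun a => ∑ b, if a < b then x a b else 0)
        (fun a _ => Finset.sum_nonneg fun b _ => hnn a b) (Finset.mem_univ i)

section Flow

variable {k : ℕ} {c f : NetVertex k → NetVertex k → ℤ}

theorem IsFlow.sum_sum_mul_flip (hf : IsFlow c f) (g : NetVertex k → NetVertex k → ℤ) :
    ∑ u, ∑ v, f u v * g v u = -∑ u, ∑ v, f u v * g u v := by
  rw [Finset.sum_comm, ← Finset.sum_neg_distrib]
  refine Finset.sum_congr rfl fun u _ => ?_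
  rw [← Finset.sum_neg_distrib]
  exact Finset.sum_congr rfl fun v _ => by rw [hf.2.1 v u, neg_mul]

theorem IsFlow.sum_sum_mul_eq (hf : IsFlow c f) (π : NetVertex k → ℤ) :
    ∑ u, ∑ v, f u v * π u = flowValue f * (π (netSrc k) - π (netSnk k)) := by
  have hne : netSrc k ≠ netSnk k := by simp [netSrc, netSnk]
  have hout : ∀ u, u ≠ netSrc k ∧ u ≠ netSnk k → ∑ v, f u v = 0 := fun u hu => by
    rw [← neg_eq_zero, ← Finset.sum_neg_distrib, ← hf.2.2 u hu.1 hu.2]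
    exact Finset.sum_congr rfl fun v _ => by rw [hf.2.1 v u]
  have htot : ∑ u, ∑ v, f u v = 0 := by
    have := hf.sum_sum_mul_flip fun _ _ => 1
    simp only [mul_one] at this
    omega
  rw [Fintype.sum_eq_add _ _ hne hout] at htot
  simp_rw [← Finset.sum_mul]
  rw [Fintype.sum_eq_add _ _ hne fun u hu => by rw [hout u hu, zero_mul], flowValue]
  linear_combination (π (netSnk k)) * htot

theorem IsFlow.sum_sum_mul_max_sub_eq (hf : IsFlow c f) (π : NetVertex k → ℤ) :
    ∑ u, ∑ v, f u v * max (π u - π v) 0 = flowValue f * (π (netSrc k) - π (netSnk k)) := by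
  have hsplit : ∀ u v, f u v * max (π u - π v) 0
      = f u v * π u - f u v * π v + f u v * max (π v - π u) 0 := fun u v => by
    have := max_zero_sub_max_neg_zero_eq_self (π u - π v)
    rw [neg_sub] at this
    linear_combination f u v * this
  have hM : ∑ u, ∑ v, f u v * max (π u - π v) 0 = ∑ u, ∑ v, f u v * π u
      - ∑ u, ∑ v, f u v * π v + ∑ u, ∑ v, f u v * max (π v - π u) 0 := by
    simp only [hsplit, Finset.sum_add_distrib, Finset.sum_sub_distrib]
  have := hf.sum_sum_mul_flip fun u _ => π u
  have := hf.sum_sum_mul_flip fun u v => max (π u - π v) 0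
  have := hf.sum_sum_mul_eq π
  linarith

theorem IsFlow.flowValue_mul_le (hf : IsFlow c f) (π : NetVertex k → ℤ) :
    flowValue f * (π (netSrc k) - π (netSnk k)) ≤ ∑ u, ∑ v, c u v * max (π u - π v) 0 := by
  rw [← hf.sum_sum_mul_max_sub_eq]
  exact Finset.sum_le_sum fun u _ => Finset.sum_le_sum fun v _ =>
    mul_le_mul_of_nonneg_right (hf.1 u v) (le_max_right _ _)

end Flow

theorem flowValue_mul_le_netCut {k : ℕ} {s t : Fin k → ℕ} {e : Fin k → Fin k → ℕ}
    (hsym : ∀ i j, i ≠ j → e i j = e j i) {f : NetVertex k → NetVertex k → ℤ}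
    (hf : IsFlow (netCap s t e) f) {D : ℤ} {p : Fin k → ℤ} (hp0 : ∀ i, 0 ≤ p i)
    (hpD : ∀ i, p i ≤ D) :
    flowValue f * D ≤ ∑ i, ((s i : ℤ) * (D - p i) + t i * p i)
      + ∑ i, ∑ j, if i < j then (e i j : ℤ) * |p i - p j| else 0 := by
  have h := hf.flowValue_mul_le (Sum.elim p fun b => if b then D else 0)
  simp only [netSrc, Sum.elim_inr, ↓reduceIte, netSnk, Bool.false_eq_true, sub_zero, netCap,
    Fintype.sum_sum_type, Sum.elim_inl, Fintype.univ_bool, mem_singleton, Bool.true_eq_false,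
    not_false_eq_true, sum_insert, zero_mul, sum_singleton, zero_add, ite_mul, add_zero, zero_sub,
    sum_const_zero] at h
  have hedge : ∑ i, ∑ j, (if i = j then 0 else (e i j : ℤ) * max (p i - p j) 0)
      = ∑ i, ∑ j, if i < j then (e i j : ℤ) * |p i - p j| else 0 := by
    rw [sum_sum_eq_sum_sum_ite_lt_add
      (fun i j => if i = j then 0 else (e i j : ℤ) * max (p i - p j) 0) fun i => if_pos rfl]
    refine Fintype.sum_congr _ _ fun i => Fintype.sum_congr _ _ fun j => ?_
    by_cases hij : i < j
    · rw [if_pos hij, if_pos hij, if_neg hij.ne, if_neg hij.ne', hsym j i hij.ne', ← mul_add,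
        ← max_zero_add_max_neg_zero_eq_abs_self, neg_sub]
    · rw [if_neg hij, if_neg hij]
  have hsrc : ∀ i, max (D - p i) 0 = D - p i := fun i => max_eq_left (sub_nonneg.mpr (hpD i))
  have hsnk : ∀ i, max (p i) 0 = p i := fun i => max_eq_left (hp0 i)
  simp only [hsrc, hsnk, Finset.sum_add_distrib, hedge] at h
  rw [Finset.sum_add_distrib]
  linarith

section Potential

variable {k : ℕ} {D : ℤ} {L R : Fin k → ℤ} {W : Fin k → Fin k → ℤ}

/-- The properties of `L i = |γ⁻¹βᵢ|`, `R i = |βᵢ|`, `W i j = |βᵢ⁻¹βⱼ|` and `D = 2n - 2`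
that the flow argument uses. -/
structure IsLengthProfile (D : ℤ) (L R : Fin k → ℤ) (W : Fin k → Fin k → ℤ) : Prop where
  left_nonneg : ∀ i, 0 ≤ L i
  right_nonneg : ∀ i, 0 ≤ R i
  le_left_add_right : ∀ i, D ≤ L i + R i
  abs_sub_left_le : ∀ i j, |L i - L j| ≤ W i j
  abs_sub_right_le : ∀ i j, |R i - R j| ≤ W i j

theorem IsLengthProfile.reflect (h : IsLengthProfile D L R W) : IsLengthProfile D R L W :=
  ⟨h.right_nonneg, h.left_nonneg, fun i => (h.le_left_add_right i).trans_eq (add_comm _ _),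
    h.abs_sub_right_le, h.abs_sub_left_le⟩

/-- Potentials whose cut (`flowValue_mul_le_netCut`) is termwise at most `F_{n,n}(β)`. -/
structure IsPotential (D : ℤ) (L R : Fin k → ℤ) (W : Fin k → Fin k → ℤ) (p : Fin k → ℤ) :
    Prop where
  nonneg : ∀ i, 0 ≤ p i
  le : ∀ i, p i ≤ D
  le_right : ∀ i, p i ≤ R i
  sub_le_left : ∀ i, D - p i ≤ L i
  abs_sub_le : ∀ i j, |p i - p j| ≤ W i j

theorem IsPotential.reflect {p : Fin k → ℤ} (h : IsPotential D R L W p) :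
    IsPotential D L R W fun i => D - p i where
  nonneg i := sub_nonneg.mpr (h.le i)
  le i := sub_le_self D (h.nonneg i)
  le_right i := h.sub_le_left i
  sub_le_left i := (sub_sub_cancel D (p i)).trans_le (h.le_right i)
  abs_sub_le i j := by rw [sub_sub_sub_cancel_left, abs_sub_comm]; exact h.abs_sub_le i j

theorem IsLengthProfile.isPotential_min_right (h : IsLengthProfile D L R W) (hD : 0 ≤ D) :
    IsPotential D L R W fun a => min (R a) D where
  nonneg a := le_min (h.right_nonneg a) hD
  le a := min_le_right _ _
  le_right a := min_le_left _ _
  sub_le_left a := by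
    have := h.le_left_add_right a
    have := h.left_nonneg a
    omega
  abs_sub_le a b := by
    have := abs_min_sub_min_le_max (R a) D (R b) D
    rw [sub_self, abs_zero, max_eq_left (abs_nonneg _)] at this
    exact this.trans (h.abs_sub_right_le a b)

/-- The part of `F_{n,n}(β) - |f| D` that the cut bound for the potential `p` leaves at the
vertices `i`, `j` and on the edge between them. -/
def pairSlack (s t : Fin k → ℕ) (e : Fin k → Fin k → ℕ) (D : ℤ) (L R : Fin k → ℤ)
    (W : Fin k → Fin k → ℤ) (p : Fin k → ℤ) (i j : Fin k) : ℤ :=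
  s i * (L i - (D - p i)) + t i * (R i - p i) + (s j * (L j - (D - p j)) + t j * (R j - p j))
    + e i j * (W i j - |p i - p j|)

theorem pairSlack_reflect (s t : Fin k → ℕ) (e : Fin k → Fin k → ℕ) (p : Fin k → ℤ)
    (i j : Fin k) :
    pairSlack t s e D R L W p i j = pairSlack s t e D L R W (fun a => D - p a) i j := by
  simp only [pairSlack, sub_sub_sub_cancel_left, abs_sub_comm (p j)]
  ring

theorem exists_potential_two_le_pairSlack_of_pos_left (h : IsLengthProfile D L R W)
    (hD : 0 ≤ D) {s t : Fin k → ℕ} {e : Fin k → Fin k → ℕ} {i j : Fin k}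
    (hi : D + 2 ≤ L i + R i) (hLi : 1 ≤ L i) (hsi : 0 < s i) (he : 0 < e i j)
    (hj : 0 < s j + t j) :
    ∃ p, IsPotential D L R W p ∧ 2 ≤ pairSlack s t e D L R W p i j := by
  set p := fun a => min (R a) D
  have hp : IsPotential D L R W p := h.isPotential_min_right hD
  refine ⟨p, hp, ?_⟩
  -- When `L i = 1`, vertex `i` leaves slack only `1`; the second unit comes from the edge `ij`,
  -- or, if `W i j = 0`, from vertex `j`, which then has the same lengths as `i`.
  have hcases : 2 ≤ L i - (D - p i) ∨ 1 ≤ L i - (D - p i) ∧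
      (1 ≤ W i j - |p i - p j| ∨ 1 ≤ L j - (D - p j) ∧ 1 ≤ R j - p j) := by
    have := abs_le.mp (h.abs_sub_left_le i j)
    have := abs_le.mp (h.abs_sub_right_le i j)
    simp only [p]
    rcases abs_cases (min (R i) D - min (R j) D) with ⟨habs, -⟩ | ⟨habs, -⟩ <;> rw [habs] <;> omega
  have hXi : 0 ≤ L i - (D - p i) := sub_nonneg.mpr (hp.sub_le_left i)
  have hYi : 0 ≤ R i - p i := sub_nonneg.mpr (hp.le_right i)
  have hXj : 0 ≤ L j - (D - p j) := sub_nonneg.mpr (hp.sub_le_left j)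
  have hYj : 0 ≤ R j - p j := sub_nonneg.mpr (hp.le_right j)
  have hZ : 0 ≤ W i j - |p i - p j| := sub_nonneg.mpr (hp.abs_sub_le i j)
  have hsi' : (1 : ℤ) ≤ s i := by exact_mod_cast hsi
  have he' : (1 : ℤ) ≤ e i j := by exact_mod_cast he
  have hj' : (1 : ℤ) ≤ s j + t j := by exact_mod_cast hj
  have hsj : (0 : ℤ) ≤ s j := by positivity
  have htj : (0 : ℤ) ≤ t j := by positivity
  have hti : (0 : ℤ) ≤ t i := by positivity
  unfold pairSlack
  have := mul_nonneg hti hYi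
  have := mul_nonneg hsj hXj
  have := mul_nonneg htj hYj
  rcases hcases with h2 | ⟨h1, hW | ⟨hX, hY⟩⟩ <;> nlinarith

theorem exists_potential_two_le_pairSlack (h : IsLengthProfile D L R W) (hD : 0 ≤ D)
    {s t : Fin k → ℕ} {e : Fin k → Fin k → ℕ} {i j : Fin k} (hi : D + 2 ≤ L i + R i)
    (hLi : 1 ≤ L i) (hRi : 1 ≤ R i) (hsti : 0 < s i + t i) (he : 0 < e i j)
    (hj : 0 < s j + t j) :
    ∃ p, IsPotential D L R W p ∧ 2 ≤ pairSlack s t e D L R W p i j := by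
  rcases Nat.eq_zero_or_pos (s i) with hs | hs
  · -- mirror image under `s ↔ t`, `L ↔ R`, `p ↔ D - p`
    obtain ⟨p, hp, hslack⟩ := exists_potential_two_le_pairSlack_of_pos_left h.reflect hD
      (s := t) (t := s) (by linarith) hRi (by omega) he (by omega)
    exact ⟨_, hp.reflect, pairSlack_reflect s t e p i j ▸ hslack⟩
  · exact exists_potential_two_le_pairSlack_of_pos_left h hD hi hLi hs he hj

theorem flowValue_mul_add_pairSlack_le {s t : Fin k → ℕ} {e : Fin k → Fin k → ℕ}
    (hsym : ∀ i j, i ≠ j → e i j = e j i) (hW : ∀ i j, W i j = W j i) {p : Fin k → ℤ}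
    (hp : IsPotential D L R W p) {f : NetVertex k → NetVertex k → ℤ}
    (hf : IsFlow (netCap s t e) f) {i j : Fin k} (hij : i ≠ j) :
    flowValue f * D + pairSlack s t e D L R W p i j
      ≤ ∑ a, ((s a : ℤ) * L a + t a * R a)
        + ∑ a, ∑ b, if a < b then (e a b : ℤ) * W a b else 0 := by
  have hcut := flowValue_mul_le_netCut hsym hf hp.nonneg hp.le
  set v := fun a => (s a : ℤ) * (L a - (D - p a)) + t a * (R a - p a)
  have hv : ∀ a, 0 ≤ v a := fun a => add_nonneg
    (mul_nonneg (by positivity) (sub_nonneg.mpr (hp.sub_le_left a)))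
    (mul_nonneg (by positivity) (sub_nonneg.mpr (hp.le_right a)))
  have hvertex : v i + v j ≤ ∑ a, v a := by
    rw [← Finset.sum_pair hij]
    exact Finset.sum_le_sum_of_subset_of_nonneg (Finset.subset_univ _) fun a _ _ => hv a
  set w := fun a b => (e a b : ℤ) * (W a b - |p a - p b|)
  have hedge : w i j ≤ ∑ a, ∑ b, if a < b then w a b else 0 := by
    refine le_sum_sum_ite_lt w (fun a b => mul_nonneg (by positivity)
      (sub_nonneg.mpr (hp.abs_sub_le a b))) (fun a b => ?_) hij
    rcases eq_or_ne a b with rfl | hab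
    · rfl
    · simp only [w, hsym a b hab, hW a b, abs_sub_comm]
  have hsum_v : ∑ a, ((s a : ℤ) * L a + t a * R a)
      = ∑ a, ((s a : ℤ) * (D - p a) + t a * p a) + ∑ a, v a := by
    rw [← Finset.sum_add_distrib]
    exact Fintype.sum_congr _ _ fun a => by ring
  have hsum_w : (∑ a, ∑ b, if a < b then (e a b : ℤ) * W a b else 0)
      = (∑ a, ∑ b, if a < b then (e a b : ℤ) * |p a - p b| else 0)
        + ∑ a, ∑ b, if a < b then w a b else 0 := by
    simp only [← Finset.sum_add_distrib]
    refine Fintype.sum_congr _ _ fun a => Fintype.sum_congr _ _ fun b => ?_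
    split_ifs
    · ring
    · simp
  simp only [pairSlack]
  linarith

end Potential

theorem isLengthProfile_permLen {n k : ℕ} (hn : n ≠ 0) (B : Fin k → Perm (Fin n ⊕ Fin n)) :
    IsLengthProfile (2 * n - 2) (fun i => permLen ((gammaNN n)⁻¹ * B i))
      (fun i => permLen (B i)) (fun i j => permLen ((B i)⁻¹ * B j)) where
  left_nonneg _ := Nat.cast_nonneg _
  right_nonneg _ := Nat.cast_nonneg _
  le_left_add_right i := by
    have := le_permLen_gammaNN_inv_mul_add_permLen hn (B i)
    omega
  abs_sub_left_le i j := abs_permLen_inv_mul_sub_le _ (B i) (B j)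
  abs_sub_right_le i j := by simpa using abs_permLen_inv_mul_sub_le 1 (B i) (B j)

theorem FnnOne_connected_flow_bound_general (n k : ℕ)
    (s t : Fin k → ℕ) (e : Fin k → Fin k → ℕ)
    (hsym : ∀ i j, i ≠ j → e i j = e j i)
    (hst : ∀ i, 0 < s i + t i)
    (he : ∀ i, 0 < ∑ j ∈ Finset.univ.erase i, e i j)
    (B : Fin k → Equiv.Perm (Fin n ⊕ Fin n))
    (hconn : ∃ i, IsConnectedPerm (B i)) :
    (∀ (f : NetVertex k → NetVertex k → ℤ), IsFlow (netCap s t e) f →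
        flowValue f * (2 * n - 2) + 2 ≤ (FnnOne n k s t e B : ℤ)) ∧
      (∀ X : ℤ, IsGreatest {v : ℤ | ∃ f, IsFlow (netCap s t e) f ∧ flowValue f = v} X →
        X * (2 * n - 2) - (FnnOne n k s t e B : ℤ) ≤ -2) := by
  have key : ∀ f, IsFlow (netCap s t e) f →
      flowValue f * (2 * n - 2) + 2 ≤ (FnnOne n k s t e B : ℤ) := by
    intro f hf
    obtain ⟨i, hi⟩ := hconn
    obtain ⟨j, hj, hej⟩ := Finset.sum_pos_iff.mp (he i)
    have hn : n ≠ 0 := by obtain ⟨a, -⟩ := hi; exact a.pos.ne'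
    have hLR : (2 * n - 2 : ℤ) + 2 ≤ permLen ((gammaNN n)⁻¹ * B i) + permLen (B i) := by
      have := hi.two_mul_le_permLen_add
      omega
    obtain ⟨p, hp, hslack⟩ := exists_potential_two_le_pairSlack (isLengthProfile_permLen hn B)
      (by omega) hLR (by have := hi.permLen_gammaNN_inv_mul_ne_zero; omega)
      (by have := hi.permLen_ne_zero; omega) (hst i) hej (hst j)
    have := flowValue_mul_add_pairSlack_le hsym
      (fun a b => congrArg _ (permLen_inv_mul_comm _ _)) hp hf (ne_of_mem_erase hj).symm
    unfold FnnOne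
    push_cast
    linarith
  refine ⟨key, fun X hX => ?_⟩
  obtain ⟨f, hf, rfl⟩ := hX.1
  linarith [key f hf]

theorem FnnOne_connected_flow_bound (n k : ℕ) (hn : 1 ≤ n) (hk : 1 ≤ k)
    (s t : Fin k → ℕ) (e : Fin k → Fin k → ℕ)
    (hsym : ∀ i j, i ≠ j → e i j = e j i)
    (hst : ∀ i, 0 < s i + t i)
    (he : ∀ i, 0 < ∑ j ∈ Finset.univ.erase i, e i j)
    (B : Fin k → Equiv.Perm (Fin n ⊕ Fin n))
    (hconn : ∃ i, IsConnectedPerm (B i)) :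
    (∀ (f : NetVertex k → NetVertex k → ℤ), IsFlow (netCap s t e) f →
        flowValue f * (2 * n - 2) + 2 ≤ (FnnOne n k s t e B : ℤ)) ∧
      (∀ X : ℤ, IsGreatest {v : ℤ | ∃ f, IsFlow (netCap s t e) f ∧ flowValue f = v} X →
        X * (2 * n - 2) - (FnnOne n k s t e B : ℤ) ≤ -2) :=
  FnnOne_connected_flow_bound_general n k s t e hsym hst he B hconn
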